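/- arXiv:1906.02228 — 2 statements merged into one kernel-verified Lean document; each statement's English description precedes it below -/
import Mathlib

section
/- Let σ be a k-permutation of degree n, let L ⊆ {1,…,n} be nonempty, and let γ be an integer with min(L) ≤ γ ≤ max(L) − 1. If γ is a k-rooted cut of σ, then the integer γ^{|L} := |{1,…,γ} ∩ L| is a k-rooted cut of the restriction σ^{|L}. -/
/-- `σ` is a `k`-permutation of degree `n`: a word over the alphabet `{1, …, n}`
in which every value `i ∈ {1, …, n}` occurs exactly `k` times (and no other
letter occurs). -/
def IsMultiPerm (k n : ℕ) (σ : List ℕ) : Prop :=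
  ∀ i : ℕ, σ.count i = if 1 ≤ i ∧ i ≤ n then k else 0

/-- The restriction `σ^{|L}` of a multipermutation `σ` to a set `L` of values:
delete all letters whose value is not in `L`, and replace, for each `x`, the
`x`-th smallest element of `L` by `x`. -/
def restrict (σ : List ℕ) (L : Finset ℕ) : List ℕ :=
  (σ.filter fun x => decide (x ∈ L)).map fun x => (L.filter fun y => y ≤ x).card

/-- `γ` is a `k`-rooted cut of the `k`-permutation `σ` of degree `n`:
`1 ≤ γ ≤ n - 1` and `σ = μ·ν·ω` where `μ` consists of the first `k` letters of
`σ` and `ν`, `ω` are words such that every letter of `ν` is at most `γ` and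
every letter of `ω` is greater than `γ`. -/
def IsKRootedCut (k n : ℕ) (σ : List ℕ) (γ : ℕ) : Prop :=
  1 ≤ γ ∧ γ ≤ n - 1 ∧
    ∃ μ ν ω : List ℕ,
      σ = μ ++ ν ++ ω ∧ μ.length = k ∧ (∀ x ∈ ν, x ≤ γ) ∧ (∀ x ∈ ω, γ < x)

/-- A `k`-permutation of degree `n` is `k`-rooted cuttable if it has a
`k`-rooted cut. -/
def KRootedCuttable (k n : ℕ) (σ : List ℕ) : Prop :=
  ∃ γ, IsKRootedCut k n σ γ

/-- A `k`-permutation of degree `n` is fully `k`-rooted cuttable if its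
restriction to every interval `{a, …, b} ⊆ {1, …, n}` with `a < b` is
`k`-rooted cuttable. -/
def FullyKRootedCuttable (k n : ℕ) (σ : List ℕ) : Prop :=
  ∀ a b : ℕ, 1 ≤ a → a < b → b ≤ n →
    KRootedCuttable k (Finset.Icc a b).card (restrict σ (Finset.Icc a b))

/-!
Restriction to `L` keeps the order of the surviving letters and replaces each value by its rank
in `L`; the rank is monotone and jumps past every element of `L`, so letters `≤ γ` go to letters
`≤ rank γ` and letters of `L` above `γ` go to letters `> rank γ`. Hence the restriction of `μ·ν·ω`
splits as `μ'·ν'·ω'` with `|μ'| ≤ k`, and moving the first `k - |μ'|` letters of `ν'·ω'` into the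
root keeps this shape. There are at least `k` letters to move because `min L` occurs `k` times.
-/

theorem List.exists_drop_append_append_eq {α : Type*} {A B C : List α} {k : ℕ}
    (h : A.length ≤ k) : ∃ ν ω, (A ++ B ++ C).drop k = ν ++ ω ∧ ν <:+ B ∧ ω <:+ C :=
  ⟨B.drop (k - A.length), C.drop (k - A.length - B.length),
    by simp [List.drop_append, List.drop_eq_nil_of_le h], B.drop_suffix _, C.drop_suffix _⟩

theorem isKRootedCut_of_length_le {k m c : ℕ} {A B C : List ℕ} (hc : 1 ≤ c) (hcm : c ≤ m - 1)
    (hA : A.length ≤ k) (hk : k ≤ (A ++ B ++ C).length)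
    (hB : ∀ x ∈ B, x ≤ c) (hC : ∀ x ∈ C, c < x) : IsKRootedCut k m (A ++ B ++ C) c := by
  obtain ⟨ν, ω, hdrop, hν, hω⟩ := List.exists_drop_append_append_eq (B := B) (C := C) hA
  refine ⟨hc, hcm, _, ν, ω, ?_, List.length_take_of_le hk,
    fun x hx => hB x (hν.subset hx), fun x hx => hC x (hω.subset hx)⟩
  rw [List.append_assoc _ ν, ← hdrop, List.take_append_drop]

def rankIn (L : Finset ℕ) (x : ℕ) : ℕ := (L.filter fun y => y ≤ x).card

section rankIn

variable {L : Finset ℕ} {x y : ℕ}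

theorem rankIn_mono (L : Finset ℕ) : Monotone (rankIn L) := fun _ _ hxy =>
  Finset.card_le_card (Finset.monotone_filter_right L fun _ _ hy => hy.trans hxy)

theorem rankIn_lt_rankIn (hy : y ∈ L) (hxy : x < y) : rankIn L x < rankIn L y := by
  refine Finset.card_lt_card ⟨Finset.monotone_filter_right L fun _ _ h => h.trans hxy.le, ?_⟩
  intro hsub
  have := (Finset.mem_filter.1 (hsub (Finset.mem_filter.2 ⟨hy, le_rfl⟩))).2
  omega

theorem rankIn_pos_iff : 0 < rankIn L x ↔ ∃ y ∈ L, y ≤ x :=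
  Finset.card_pos.trans Finset.filter_nonempty_iff

theorem rankIn_lt_card (hy : y ∈ L) (hxy : x < y) : rankIn L x < L.card :=
  Finset.card_lt_card (Finset.filter_ssubset.2 ⟨y, hy, not_le.2 hxy⟩)

theorem card_Icc_inter_eq_rankIn (hL : ∀ y ∈ L, 1 ≤ y) (x : ℕ) :
    (Finset.Icc 1 x ∩ L).card = rankIn L x := by
  congr 1
  ext y
  simp only [Finset.mem_inter, Finset.mem_Icc, Finset.mem_filter]
  have := hL y
  tauto

end rankIn

section restrict

variable {σ τ : List ℕ} {L : Finset ℕ}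

theorem restrict_append : restrict (σ ++ τ) L = restrict σ L ++ restrict τ L := by
  simp [restrict]

theorem length_restrict_le (σ : List ℕ) (L : Finset ℕ) : (restrict σ L).length ≤ σ.length := by
  simpa [restrict] using List.length_filter_le _ σ

theorem count_le_length_restrict {a : ℕ} (ha : a ∈ L) : σ.count a ≤ (restrict σ L).length := by
  rw [restrict, List.length_map, ← List.countP_eq_length_filter, List.count_eq_countP]
  exact List.countP_mono_left fun x _ hx => by simpa [beq_iff_eq.1 hx] using ha

theorem forall_mem_restrict {p : ℕ → Prop} :
    (∀ x ∈ restrict σ L, p x) ↔ ∀ y ∈ σ, y ∈ L → p (rankIn L y) := by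
  rw [restrict, List.forall_mem_map]
  simp only [List.mem_filter, decide_eq_true_eq, and_imp, rankIn]

theorem forall_mem_restrict_le {γ : ℕ} (h : ∀ y ∈ σ, y ≤ γ) :
    ∀ x ∈ restrict σ L, x ≤ rankIn L γ :=
  forall_mem_restrict.2 fun y hy _ => rankIn_mono L (h y hy)

theorem forall_mem_restrict_lt {γ : ℕ} (h : ∀ y ∈ σ, γ < y) :
    ∀ x ∈ restrict σ L, rankIn L γ < x :=
  forall_mem_restrict.2 fun y hy hyL => rankIn_lt_rankIn hyL (h y hy)

end restrict

theorem isKRootedCut_restrict_general (k n : ℕ)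
    (σ : List ℕ) (hσ : IsMultiPerm k n σ) (L : Finset ℕ) (hL : L.Nonempty)
    (hLsub : L ⊆ Finset.Icc 1 n) (γ : ℕ)
    (hγ₁ : L.min' hL ≤ γ) (hγ₂ : γ ≤ L.max' hL - 1)
    (hγ : IsKRootedCut k n σ γ) :
    IsKRootedCut k L.card (restrict σ L) ((Finset.Icc 1 γ ∩ L).card) := by
  obtain ⟨hγ_pos, -, μ, ν, ω, rfl, hμ, hν, hω⟩ := hγ
  have hmin := L.min'_mem hL
  have hk : k ≤ (restrict (μ ++ ν ++ ω) L).length := by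
    have hcount := hσ (L.min' hL)
    rw [if_pos (Finset.mem_Icc.1 (hLsub hmin))] at hcount
    exact hcount ▸ count_le_length_restrict hmin
  rw [card_Icc_inter_eq_rankIn (fun y hy => (Finset.mem_Icc.1 (hLsub hy)).1)]
  rw [restrict_append, restrict_append] at hk ⊢
  exact isKRootedCut_of_length_le (rankIn_pos_iff.2 ⟨_, hmin, hγ₁⟩)
    (Nat.le_sub_one_of_lt (rankIn_lt_card (L.max'_mem hL) (by omega)))
    ((length_restrict_le μ L).trans hμ.le) hk (forall_mem_restrict_le hν)
    (forall_mem_restrict_lt hω)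

/-- If `γ` is a `k`-rooted cut of a `k`-permutation `σ` of degree `n`, and
`L ⊆ {1, …, n}` is nonempty with `min L ≤ γ ≤ max L - 1`, then
`γ^{|L} = |{1, …, γ} ∩ L|` is a `k`-rooted cut of the restriction `σ^{|L}`. -/
theorem isKRootedCut_restrict (k n : ℕ) (hk : 1 ≤ k) (hn : 1 ≤ n)
    (σ : List ℕ) (hσ : IsMultiPerm k n σ) (L : Finset ℕ) (hL : L.Nonempty)
    (hLsub : L ⊆ Finset.Icc 1 n) (γ : ℕ)
    (hγ₁ : L.min' hL ≤ γ) (hγ₂ : γ ≤ L.max' hL - 1)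
    (hγ : IsKRootedCut k n σ γ) :
    IsKRootedCut k L.card (restrict σ L) ((Finset.Icc 1 γ ∩ L).card) :=
  isKRootedCut_restrict_general k n σ hσ L hL hLsub γ hγ₁ hγ₂ hγ
end

section
/- A 2-permutation σ is fully 2-rooted cuttable if and only if it avoids the pattern b·b′·c·a with a ≤ b, b′ ≤ c; that is, if and only if there exist no positions p1 < p2 < p3 < p4 with σ(p4) ≤ σ(p1) ≤ σ(p3) and σ(p4) ≤ σ(p2) ≤ σ(p3). -/
/-!
If `σ` contains `b b' c a`, restrict it to the values `a, …, c`: after the two root letters, the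
largest value still precedes the smallest one, which no cut allows.

Conversely, let `τ = x y ρ` avoid the pattern, have letters in `{1, …, m}` and no cut. Then every
split of `ρ` into two nonempty pieces is crossed by some `c` before some `a ≤ c`, and both `1` and
`m` occur in `ρ`. Call a letter `z` of `ρ` a record if `x, y ≤ z` and `z` exceeds every earlier
letter of `ρ`; the first `m` of `ρ` is a record, and avoiding `x y m 1` puts every `1` of `ρ`
before it. Crossing the split just before a record `z` by `c … a` and avoiding `x c z a`,
`y c z a` and `p c z a` (for `p` before `c`) makes `c` an earlier record, and avoiding `x y c w`
keeps every `w ≤ min x y` before `c`. This descent cannot go on forever, yet a `1` always lies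
before the current record.
-/

open List

def HasBBCAPattern (τ : List ℕ) : Prop :=
  ∃ b b' c a : ℕ, [b, b', c, a] <+ τ ∧ a ≤ b ∧ b ≤ c ∧ a ≤ b' ∧ b' ≤ c

theorem HasBBCAPattern.mono {τ τ' : List ℕ} (h : HasBBCAPattern τ) (hsub : τ <+ τ') :
    HasBBCAPattern τ' :=
  let ⟨b, b', c, a, hpat, hineq⟩ := h
  ⟨b, b', c, a, hpat.trans hsub, hineq⟩

theorem HasBBCAPattern.of_map {f : ℕ → ℕ} {τ : List ℕ}
    (hf : ∀ u ∈ τ, ∀ v ∈ τ, f u ≤ f v → u ≤ v) (h : HasBBCAPattern (τ.map f)) :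
    HasBBCAPattern τ := by
  obtain ⟨b, b', c, a, hsub, hab, hbc, hab', hbc'⟩ := h
  obtain ⟨l, hl, hmap⟩ := sublist_map_iff.mp hsub
  rcases l with _ | ⟨b₀, _ | ⟨b₀', _ | ⟨c₀, _ | ⟨a₀, _ | _⟩⟩⟩⟩ <;> simp only [map_cons,
    map_nil, cons.injEq, reduceCtorEq, and_false] at hmap
  obtain ⟨rfl, rfl, rfl, rfl, -⟩ := hmap
  have hmem : ∀ u ∈ [b₀, b₀', c₀, a₀], u ∈ τ := fun u hu => hl.subset hu
  simp only [mem_cons, not_mem_nil, or_false, forall_eq_or_imp, forall_eq] at hmem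
  exact ⟨b₀, b₀', c₀, a₀, hl, hf _ hmem.2.2.2 _ hmem.1 hab, hf _ hmem.1 _ hmem.2.2.1 hbc,
    hf _ hmem.2.2.2 _ hmem.2.1 hab', hf _ hmem.2.1 _ hmem.2.2.1 hbc'⟩

theorem map_get_sublist_of_pairwise_lt {α : Type*} (l : List α) {ps : List (Fin l.length)}
    (hps : ps.Pairwise (· < ·)) : ps.map l.get <+ l := by
  have hsub : ps <+ finRange l.length :=
    sublist_of_subperm_of_pairwise (r := (· ≤ ·))
      (subperm_of_subset hps.nodup fun _ _ => mem_finRange _)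
      (hps.imp le_of_lt) ((pairwise_lt_finRange _).imp le_of_lt)
  simpa using hsub.map l.get

theorem hasBBCAPattern_iff_exists_fin (σ : List ℕ) :
    HasBBCAPattern σ ↔ ∃ p₁ p₂ p₃ p₄ : Fin σ.length, p₁ < p₂ ∧ p₂ < p₃ ∧ p₃ < p₄ ∧
      σ.get p₄ ≤ σ.get p₁ ∧ σ.get p₁ ≤ σ.get p₃ ∧
      σ.get p₄ ≤ σ.get p₂ ∧ σ.get p₂ ≤ σ.get p₃ := by
  constructor
  · rintro ⟨b, b', c, a, hsub, hineq⟩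
    obtain ⟨f, hf⟩ := sublist_iff_exists_fin_orderEmbedding_get_eq.mp hsub
    refine ⟨f ⟨0, by simp⟩, f ⟨1, by simp⟩, f ⟨2, by simp⟩, f ⟨3, by simp⟩,
      f.strictMono (Fin.mk_lt_mk.mpr (by norm_num)), f.strictMono (Fin.mk_lt_mk.mpr (by norm_num)),
      f.strictMono (Fin.mk_lt_mk.mpr (by norm_num)), ?_⟩
    rw [← hf, ← hf, ← hf, ← hf]
    exact hineq
  · rintro ⟨p₁, p₂, p₃, p₄, h₁₂, h₂₃, h₃₄, hineq⟩
    have hps : [p₁, p₂, p₃, p₄].Pairwise (· < ·) := by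
      simp only [pairwise_cons, mem_cons]; grind
    exact ⟨_, _, _, _, map_get_sublist_of_pairwise_lt σ hps, hineq⟩

theorem IsMultiPerm.mem_bounds {k n x : ℕ} {σ : List ℕ} (hσ : IsMultiPerm k n σ) (hx : x ∈ σ) :
    1 ≤ x ∧ x ≤ n := by
  by_contra hout
  have := count_pos_iff.mpr hx
  rw [hσ x, if_neg hout] at this
  exact this.false

theorem restrict_Icc (σ : List ℕ) (a b : ℕ) :
    restrict σ (Finset.Icc a b) =
      (σ.filter fun x => decide (x ∈ Finset.Icc a b)).map (· + 1 - a) := by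
  refine map_congr_left fun x hx => ?_
  have hx' : a ≤ x ∧ x ≤ b := by simpa using (mem_filter.mp hx).2
  have hIcc : (Finset.Icc a b).filter (· ≤ x) = Finset.Icc a x := by
    ext y
    simp only [Finset.mem_filter, Finset.mem_Icc]
    omega
  rw [hIcc, Nat.card_Icc]

theorem HasBBCAPattern.of_restrict_Icc {σ : List ℕ} {a b : ℕ}
    (h : HasBBCAPattern (restrict σ (Finset.Icc a b))) : HasBBCAPattern σ := by
  rw [restrict_Icc] at h
  refine (h.of_map fun u hu v hv huv => ?_).mono filter_sublist
  simp only [mem_filter, Finset.mem_Icc, decide_eq_true_eq] at hu hv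
  omega

theorem IsKRootedCut.not_sublist {k n γ c a : ℕ} {τ l : List ℕ} (hcut : IsKRootedCut k n τ γ)
    (hsub : l ++ [c, a] <+ τ) (hl : l.length = k) (ha : a ≤ γ) (hc : γ < c) : False := by
  obtain ⟨-, -, μ, ν, ω, rfl, hμ, hν, hω⟩ := hcut
  have hca : [c, a] <+ ν ++ ω := by simpa [hl, hμ] using hsub.drop k
  obtain ⟨r₁, r₂, hr, hr₁, hr₂⟩ := sublist_append_iff.mp hca
  rcases r₁ with _ | ⟨c', r₁⟩
  · rw [nil_append] at hr
    subst hr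
    have := hω a (hr₂.subset (by simp))
    omega
  · rw [cons_append, cons.injEq] at hr
    obtain ⟨rfl, -⟩ := hr
    have := hν c (hr₁.subset mem_cons_self)
    omega

section TwoRooted

variable {m x y : ℕ} {rest : List ℕ}

theorem kRootedCuttable_two_of_split {l₁ l₂ : List ℕ} {γ : ℕ} (hγ : 1 ≤ γ) (hγm : γ ≤ m - 1)
    (h₁ : ∀ z ∈ l₁, z ≤ γ) (h₂ : ∀ z ∈ l₂, γ < z) :
    KRootedCuttable 2 m (x :: y :: (l₁ ++ l₂)) :=
  ⟨γ, hγ, hγm, [x, y], l₁, l₂, rfl, rfl, h₁, h₂⟩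

theorem one_mem_of_not_kRootedCuttable_two (hm : 2 ≤ m) (hbound : ∀ z ∈ rest, 1 ≤ z)
    (hcut : ¬ KRootedCuttable 2 m (x :: y :: rest)) : 1 ∈ rest := by
  by_contra h1
  refine hcut (kRootedCuttable_two_of_split (l₁ := []) le_rfl (by omega) (by simp) fun z hz => ?_)
  have := hbound z hz
  have : z ≠ 1 := by rintro rfl; exact h1 hz
  omega

theorem degree_mem_of_not_kRootedCuttable_two (hm : 2 ≤ m) (hbound : ∀ z ∈ rest, z ≤ m)
    (hcut : ¬ KRootedCuttable 2 m (x :: y :: rest)) : m ∈ rest := by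
  by_contra hmr
  rw [← append_nil rest] at hcut
  refine hcut (kRootedCuttable_two_of_split (γ := m - 1) (by omega) le_rfl (fun z hz => ?_)
    (by simp))
  have := hbound z hz
  have : z ≠ m := by rintro rfl; exact hmr hz
  omega

theorem exists_le_of_not_kRootedCuttable_two (hbound : ∀ z ∈ rest, 1 ≤ z ∧ z ≤ m)
    (hcut : ¬ KRootedCuttable 2 m (x :: y :: rest)) {l₁ l₂ : List ℕ} (hsplit : rest = l₁ ++ l₂)
    (hl₁ : l₁ ≠ []) (hl₂ : l₂ ≠ []) : ∃ c ∈ l₁, ∃ a ∈ l₂, a ≤ c := by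
  by_contra! hlt
  subst hsplit
  obtain ⟨γ, hγ, hγmax⟩ := l₁.toFinset.exists_max_image id (by simpa using hl₁)
  obtain ⟨a, ha⟩ := exists_mem_of_ne_nil l₂ hl₂
  rw [mem_toFinset] at hγ
  have hγ₁ := (hbound γ (mem_append_left _ hγ)).1
  have ha₂ := (hbound a (mem_append_right _ ha)).2
  have hγa := hlt γ hγ a ha
  exact hcut (kRootedCuttable_two_of_split hγ₁ (by omega) (fun z hz => hγmax z (by simpa using hz))
    fun z hz => hlt γ hγ z hz)

theorem min_lt_of_mem_before_record (havoid : ¬ HasBBCAPattern (x :: y :: rest))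
    (hcross : ∀ l₁ l₂, rest = l₁ ++ l₂ → l₁ ≠ [] → l₂ ≠ [] → ∃ c ∈ l₁, ∃ a ∈ l₂, a ≤ c)
    (l : List ℕ) (z : ℕ) (l' : List ℕ) (hrest : rest = l ++ z :: l') (hxz : x ≤ z) (hyz : y ≤ z)
    (hlz : ∀ p ∈ l, p < z) : ∀ w ∈ l, min x y < w := by
  induction hlen : l.length using Nat.strong_induction_on generalizing l z l' with
  | _ k ih =>
  intro w hw
  by_contra! hwmin
  obtain ⟨c, hc, a, ha, hac⟩ := hcross l (z :: l') hrest (ne_nil_of_mem hw) (cons_ne_nil _ _)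
  have hcz := hlz c hc
  have ha' : a ∈ l' := by
    rcases mem_cons.mp ha with rfl | ha'
    · omega
    · exact ha'
  obtain ⟨l₁, l₂, rfl⟩ := append_of_mem hc
  have hcza : [c, z, a] <+ c :: (l₂ ++ z :: l') :=
    (((singleton_sublist.mpr ha').cons_cons z).trans (sublist_append_right _ _)).cons_cons c
  have hpat : ∀ p ∈ x :: y :: l₁, [p, c, z, a] <+ x :: y :: rest := by
    intro p hp
    simpa [hrest] using (singleton_sublist.mpr hp).append hcza
  have hxa : x < a := by
    by_contra!
    exact havoid ⟨x, c, z, a, hpat x (by simp), by omega, hxz, hac, hcz.le⟩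
  have hya : y < a := by
    by_contra!
    exact havoid ⟨y, c, z, a, hpat y (by simp), by omega, hyz, hac, hcz.le⟩
  have hl₁a : ∀ p ∈ l₁, p < a := by
    intro p hp
    by_contra!
    have hpz := hlz p (mem_append_left _ hp)
    exact havoid ⟨p, c, z, a, hpat p (by simp [hp]), by omega, hpz.le, hac, hcz.le⟩
  have ih₁ := ih l₁.length (by simp [← hlen]) l₁ c (l₂ ++ z :: l') (by simp [hrest])
    (by omega) (by omega) (fun p hp => (hl₁a p hp).trans_le hac) rfl
  rcases mem_append.mp hw with hw₁ | hw₂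
  · exact (ih₁ w hw₁).not_ge hwmin
  rcases mem_cons.mp hw₂ with rfl | hw₂
  · omega
  have hcw : [c, w] <+ rest := by
    rw [hrest]
    exact sublist_append_of_sublist_left
      (sublist_append_of_sublist_right ((singleton_sublist.mpr hw₂).cons_cons c))
  exact havoid ⟨x, y, c, w, (hcw.cons_cons y).cons_cons x, by omega, by omega, by omega, by omega⟩

theorem kRootedCuttable_two_of_not_hasBBCAPattern (hm : 2 ≤ m)
    (hbound : ∀ z ∈ x :: y :: rest, 1 ≤ z ∧ z ≤ m) (havoid : ¬ HasBBCAPattern (x :: y :: rest)) :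
    KRootedCuttable 2 m (x :: y :: rest) := by
  by_contra hcut
  have hrest : ∀ z ∈ rest, 1 ≤ z ∧ z ≤ m := fun z hz => hbound z (by simp [hz])
  have hx := hbound x (by simp)
  have hy := hbound y (by simp)
  have hmem := degree_mem_of_not_kRootedCuttable_two hm (fun z hz => (hrest z hz).2) hcut
  obtain ⟨l, l', hsplit, hml⟩ := eq_append_cons_of_mem hmem
  have hone : 1 ∈ l := by
    have h1 := one_mem_of_not_kRootedCuttable_two hm (fun z hz => (hrest z hz).1) hcut
    rw [hsplit] at h1
    rcases mem_append.mp h1 with h1 | h1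
    · exact h1
    rcases mem_cons.mp h1 with h1 | h1
    · omega
    have h1m : [m, 1] <+ rest := by
      rw [hsplit]
      exact sublist_append_of_sublist_right ((singleton_sublist.mpr h1).cons_cons m)
    exact absurd ⟨x, y, m, 1, (h1m.cons_cons y).cons_cons x, hx.1, hx.2, hy.1, hy.2⟩ havoid
  have := min_lt_of_mem_before_record havoid
    (fun _ _ hs h₁ h₂ => exists_le_of_not_kRootedCuttable_two hrest hcut hs h₁ h₂)
    l m l' hsplit hx.2 hy.2 (fun p hp => lt_of_le_of_ne (hrest p (by simp [hsplit, hp])).2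
      (by rintro rfl; exact hml hp)) 1 hone
  omega

end TwoRooted

theorem IsMultiPerm.not_hasBBCAPattern {n : ℕ} {σ : List ℕ} (hσ : IsMultiPerm 2 n σ)
    (hfull : FullyKRootedCuttable 2 n σ) : ¬ HasBBCAPattern σ := by
  rintro ⟨b, b', c, a, hsub, hab, hbc, hab', hbc'⟩
  have ha := hσ.mem_bounds (hsub.subset (by simp : a ∈ [b, b', c, a]))
  have hc := hσ.mem_bounds (hsub.subset (by simp : c ∈ [b, b', c, a]))
  have hac : a < c := by
    by_contra!
    have hcount := hsub.count_le a
    rw [show [b, b', c, a] = [a, a, a, a] by simp only [cons.injEq, and_true]; omega] at hcount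
    rw [hσ a, if_pos ha] at hcount
    simp at hcount
  obtain ⟨γ, hcut⟩ := hfull a c ha.1 hac hc.2
  have hγ := hcut.2.1
  have hγ₁ := hcut.1
  rw [Nat.card_Icc] at hγ
  have hsub' : [b + 1 - a, b' + 1 - a] ++ [c + 1 - a, a + 1 - a] <+
      restrict σ (Finset.Icc a c) := by
    rw [restrict_Icc]
    have := (hsub.filter fun x => decide (x ∈ Finset.Icc a c)).map (· + 1 - a)
    simpa [hab, hbc, hab', hbc', hac.le] using this
  exact hcut.not_sublist hsub' rfl (by omega) (by omega)

theorem IsMultiPerm.fullyKRootedCuttable_two {n : ℕ} {σ : List ℕ} (hσ : IsMultiPerm 2 n σ)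
    (havoid : ¬ HasBBCAPattern σ) : FullyKRootedCuttable 2 n σ := by
  intro a b ha hab hbn
  have havoid' : ¬ HasBBCAPattern (restrict σ (Finset.Icc a b)) := fun h =>
    havoid h.of_restrict_Icc
  have hbound : ∀ z ∈ restrict σ (Finset.Icc a b), 1 ≤ z ∧ z ≤ (Finset.Icc a b).card := by
    rw [restrict_Icc, Nat.card_Icc]
    intro z hz
    simp only [mem_map, mem_filter, Finset.mem_Icc, decide_eq_true_eq] at hz
    omega
  have hlen : 2 ≤ (restrict σ (Finset.Icc a b)).length := by
    rw [restrict_Icc, length_map]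
    calc 2 = (σ.filter fun x => decide (x ∈ Finset.Icc a b)).count a := by
          rw [count_filter (by simp only [Finset.mem_Icc, decide_eq_true_eq]; omega), hσ a,
            if_pos (by omega)]
      _ ≤ _ := count_le_length
  generalize restrict σ (Finset.Icc a b) = τ at havoid' hbound hlen ⊢
  rcases τ with _ | ⟨x, _ | ⟨y, rest⟩⟩
  · simp at hlen
  · simp at hlen
  exact kRootedCuttable_two_of_not_hasBBCAPattern (by rw [Nat.card_Icc]; omega) hbound havoid'

theorem fullyTwoRootedCuttable_iff_avoids_general (n : ℕ)
    (σ : List ℕ) (hσ : IsMultiPerm 2 n σ) :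
    FullyKRootedCuttable 2 n σ ↔
      ¬ ∃ p₁ p₂ p₃ p₄ : Fin σ.length, p₁ < p₂ ∧ p₂ < p₃ ∧ p₃ < p₄ ∧
          σ.get p₄ ≤ σ.get p₁ ∧ σ.get p₁ ≤ σ.get p₃ ∧
          σ.get p₄ ≤ σ.get p₂ ∧ σ.get p₂ ≤ σ.get p₃ := by
  rw [← hasBBCAPattern_iff_exists_fin]
  exact ⟨hσ.not_hasBBCAPattern, hσ.fullyKRootedCuttable_two⟩

/-- A `2`-permutation is fully `2`-rooted cuttable if and only if it avoids the
pattern `b·b'·c·a` with `a ≤ b, b' ≤ c`, i.e. there are no positions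
`p₁ < p₂ < p₃ < p₄` with `σ(p₄) ≤ σ(p₁) ≤ σ(p₃)` and `σ(p₄) ≤ σ(p₂) ≤ σ(p₃)`. -/
theorem fullyTwoRootedCuttable_iff_avoids (n : ℕ) (hn : 1 ≤ n)
    (σ : List ℕ) (hσ : IsMultiPerm 2 n σ) :
    FullyKRootedCuttable 2 n σ ↔
      ¬ ∃ p₁ p₂ p₃ p₄ : Fin σ.length, p₁ < p₂ ∧ p₂ < p₃ ∧ p₃ < p₄ ∧
          σ.get p₄ ≤ σ.get p₁ ∧ σ.get p₁ ≤ σ.get p₃ ∧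
          σ.get p₄ ≤ σ.get p₂ ∧ σ.get p₂ ≤ σ.get p₃ :=
  fullyTwoRootedCuttable_iff_avoids_general n σ hσ
end
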